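/- arXiv:2009.09188 — 2 statements merged into one kernel-verified Lean document; each statement's English description precedes it below -/
import Mathlib

section
/- If ε(s) = ∫₀ᴸ φ_l(s−ξ) f(ξ) dξ with the bi-exponential kernel, then ε satisfies the constitutive boundary conditions ε'(0) = ε(0)/l and ε'(L) = −ε(L)/l. -/
open MeasureTheory intervalIntegral

theorem convolution_constitutive_BC (L l : ℝ) (hL : 0 < L) (hl : 0 < l)
    (f : ℝ → ℝ) (hf : ContinuousOn f (Set.Icc 0 L))
    (ε : ℝ → ℝ)
    (hε : ∀ s : ℝ, ε s = ∫ ξ in (0:ℝ)..L, (1 / (2 * l)) * Real.exp (-|s - ξ| / l) * f ξ) :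
    deriv ε 0 = ε 0 / l ∧ deriv ε L = -(ε L) / l := by
  have hl' : l ≠ 0 := ne_of_gt hl
  set k₁ : ℝ → ℝ := fun ξ => (1/(2*l)) * Real.exp (ξ/l) * f ξ with hk1
  set k₂ : ℝ → ℝ := fun ξ => (1/(2*l)) * Real.exp (-ξ/l) * f ξ with hk2
  set A : ℝ → ℝ := fun s => ∫ ξ in (0:ℝ)..s, k₁ ξ with hA
  set B : ℝ → ℝ := fun s => ∫ ξ in s..L, k₂ ξ with hB
  have hk₁c : ContinuousOn k₁ (Set.Icc 0 L) :=
    ((continuous_const.mul (Real.continuous_exp.comp (continuous_id.div_const l))).continuousOn).mul hf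
  have hk₂c : ContinuousOn k₂ (Set.Icc 0 L) :=
    ((continuous_const.mul (Real.continuous_exp.comp (continuous_id.neg.div_const l))).continuousOn).mul hf
  have hIccI : Set.Icc (0:ℝ) L ∈ nhdsWithin 0 (Set.Ioi 0) :=
    Filter.mem_of_superset (inter_mem_nhdsWithin _ (Iio_mem_nhds hL))
      (fun x hx => ⟨le_of_lt hx.1, le_of_lt hx.2⟩)
  have hIccL : Set.Icc (0:ℝ) L ∈ nhdsWithin L (Set.Iic L) :=
    Filter.mem_of_superset (inter_mem_nhdsWithin _ (Ioi_mem_nhds hL))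
      (fun x hx => ⟨le_of_lt hx.2, hx.1⟩)
  have hk₁i : IntervalIntegrable k₁ volume 0 L := by
    apply ContinuousOn.intervalIntegrable
    rwa [Set.uIcc_of_le (le_of_lt hL)]
  have hk₂i : IntervalIntegrable k₂ volume 0 L := by
    apply ContinuousOn.intervalIntegrable
    rwa [Set.uIcc_of_le (le_of_lt hL)]
  -- FTC derivatives of A, B at the endpoints
  have hA0 : HasDerivWithinAt A (k₁ 0) (Set.Ici 0) 0 := by
    apply intervalIntegral.integral_hasDerivWithinAt_right (IntervalIntegrable.refl)
      (t := Set.Ioi 0)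
    · exact ⟨Set.Icc 0 L, hIccI, hk₁c.aestronglyMeasurable measurableSet_Icc⟩
    · exact (hk₁c.continuousWithinAt ⟨le_refl 0, le_of_lt hL⟩).mono_of_mem_nhdsWithin hIccI
  have hB0 : HasDerivWithinAt B (-(k₂ 0)) (Set.Ici 0) 0 := by
    apply intervalIntegral.integral_hasDerivWithinAt_left hk₂i (t := Set.Ioi 0)
    · exact ⟨Set.Icc 0 L, hIccI, hk₂c.aestronglyMeasurable measurableSet_Icc⟩
    · exact (hk₂c.continuousWithinAt ⟨le_refl 0, le_of_lt hL⟩).mono_of_mem_nhdsWithin hIccI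
  have hAL : HasDerivWithinAt A (k₁ L) (Set.Iic L) L := by
    apply intervalIntegral.integral_hasDerivWithinAt_right hk₁i (t := Set.Iic L)
    · exact ⟨Set.Icc 0 L, hIccL, hk₁c.aestronglyMeasurable measurableSet_Icc⟩
    · exact (hk₁c.continuousWithinAt ⟨le_of_lt hL, le_refl L⟩).mono_of_mem_nhdsWithin hIccL
  have hBL : HasDerivWithinAt B (-(k₂ L)) (Set.Iic L) L := by
    apply intervalIntegral.integral_hasDerivWithinAt_left (IntervalIntegrable.refl)
      (t := Set.Iic L)
    · exact ⟨Set.Icc 0 L, hIccL, hk₂c.aestronglyMeasurable measurableSet_Icc⟩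
    · exact (hk₂c.continuousWithinAt ⟨le_of_lt hL, le_refl L⟩).mono_of_mem_nhdsWithin hIccL
  -- ε = g on [0, L]
  have hεg : ∀ s ∈ Set.Icc (0:ℝ) L, ε s = Real.exp (-s/l) * A s + Real.exp (s/l) * B s := by
    intro s hs
    have hι1 : IntervalIntegrable (fun ξ => (1 / (2 * l)) * Real.exp (-|s - ξ| / l) * f ξ)
        volume 0 s := by
      apply ContinuousOn.intervalIntegrable
      apply ContinuousOn.mul
      · exact (continuous_const.mul (Real.continuous_exp.comp
          (((continuous_const.sub continuous_id).abs.neg).div_const l))).continuousOn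
      · apply hf.mono
        rw [Set.uIcc_of_le hs.1]
        exact fun x hx => ⟨hx.1, le_trans hx.2 hs.2⟩
    have hι2 : IntervalIntegrable (fun ξ => (1 / (2 * l)) * Real.exp (-|s - ξ| / l) * f ξ)
        volume s L := by
      apply ContinuousOn.intervalIntegrable
      apply ContinuousOn.mul
      · exact (continuous_const.mul (Real.continuous_exp.comp
          (((continuous_const.sub continuous_id).abs.neg).div_const l))).continuousOn
      · apply hf.mono
        rw [Set.uIcc_of_le hs.2]
        exact fun x hx => ⟨le_trans hs.1 hx.1, hx.2⟩
    rw [hε s, ← intervalIntegral.integral_add_adjacent_intervals hι1 hι2]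
    congr 1
    · rw [show Real.exp (-s/l) * A s = ∫ ξ in (0:ℝ)..s, Real.exp (-s/l) * k₁ ξ from
        (intervalIntegral.integral_const_mul _ _).symm]
      apply intervalIntegral.integral_congr
      intro ξ hξ
      rw [Set.uIcc_of_le hs.1] at hξ
      have : |s - ξ| = s - ξ := abs_of_nonneg (by linarith [hξ.2])
      show (1/(2*l)) * Real.exp (-|s - ξ|/l) * f ξ = Real.exp (-s/l) * ((1/(2*l)) * Real.exp (ξ/l) * f ξ)
      rw [this]
      rw [show -(s - ξ)/l = -s/l + ξ/l by ring, Real.exp_add]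
      ring
    · rw [show Real.exp (s/l) * B s = ∫ ξ in s..L, Real.exp (s/l) * k₂ ξ from
        (intervalIntegral.integral_const_mul _ _).symm]
      apply intervalIntegral.integral_congr
      intro ξ hξ
      rw [Set.uIcc_of_le hs.2] at hξ
      have : |s - ξ| = ξ - s := by rw [abs_sub_comm]; exact abs_of_nonneg (by linarith [hξ.1])
      show (1/(2*l)) * Real.exp (-|s - ξ|/l) * f ξ = Real.exp (s/l) * ((1/(2*l)) * Real.exp (-ξ/l) * f ξ)
      rw [this]
      rw [show -(ξ - s)/l = s/l + -ξ/l by ring, Real.exp_add]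
      ring
  -- ε on (-∞, 0]
  have hεleft : ∀ s ∈ Set.Iic (0:ℝ), ε s = Real.exp (s/l) * B 0 := by
    intro s hs
    rw [hε s, hB]
    simp only
    rw [show Real.exp (s/l) * ∫ ξ in (0:ℝ)..L, k₂ ξ = ∫ ξ in (0:ℝ)..L, Real.exp (s/l) * k₂ ξ from
      (intervalIntegral.integral_const_mul _ _).symm]
    apply intervalIntegral.integral_congr
    intro ξ hξ
    rw [Set.uIcc_of_le (le_of_lt hL)] at hξ
    have : |s - ξ| = ξ - s := by rw [abs_sub_comm]; exact abs_of_nonneg (by simp only [Set.mem_Iic] at hs; linarith [hξ.1])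
    show (1/(2*l)) * Real.exp (-|s - ξ|/l) * f ξ = Real.exp (s/l) * ((1/(2*l)) * Real.exp (-ξ/l) * f ξ)
    rw [this]
    rw [show -(ξ - s)/l = s/l + -ξ/l by ring, Real.exp_add]
    ring
  -- ε on [L, ∞)
  have hεright : ∀ s ∈ Set.Ici L, ε s = Real.exp (-s/l) * A L := by
    intro s hs
    rw [hε s, hA]
    simp only
    rw [show Real.exp (-s/l) * ∫ ξ in (0:ℝ)..L, k₁ ξ = ∫ ξ in (0:ℝ)..L, Real.exp (-s/l) * k₁ ξ from
      (intervalIntegral.integral_const_mul _ _).symm]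
    apply intervalIntegral.integral_congr
    intro ξ hξ
    rw [Set.uIcc_of_le (le_of_lt hL)] at hξ
    have : |s - ξ| = s - ξ := abs_of_nonneg (by simp only [Set.mem_Ici] at hs; linarith [hξ.2])
    show (1/(2*l)) * Real.exp (-|s - ξ|/l) * f ξ = Real.exp (-s/l) * ((1/(2*l)) * Real.exp (ξ/l) * f ξ)
    rw [this]
    rw [show -(s - ξ)/l = -s/l + ξ/l by ring, Real.exp_add]
    ring
  have hA00 : A 0 = 0 := intervalIntegral.integral_same
  have hBLL : B L = 0 := intervalIntegral.integral_same
  have hε0 : ε 0 = B 0 := by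
    rw [hεg 0 ⟨le_refl 0, le_of_lt hL⟩, hA00]
    simp
  have hεL : ε L = Real.exp (-L/l) * A L := by
    rw [hεg L ⟨le_of_lt hL, le_refl L⟩, hBLL]
    simp
  have hk12_0 : k₁ 0 = k₂ 0 := by simp [hk1, hk2]
  -- exp derivatives
  have hexpneg : ∀ x : ℝ, HasDerivAt (fun s => Real.exp (-s/l)) (Real.exp (-x/l) * (-1/l)) x := by
    intro x
    have : HasDerivAt (fun s : ℝ => -s/l) (-1/l) x := ((hasDerivAt_id x).neg).div_const l
    exact this.exp
  have hexppos : ∀ x : ℝ, HasDerivAt (fun s => Real.exp (s/l)) (Real.exp (x/l) * (1/l)) x := by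
    intro x
    have : HasDerivAt (fun s : ℝ => s/l) (1/l) x := (hasDerivAt_id x).div_const l
    exact this.exp
  constructor
  · -- at 0
    have hg0 : HasDerivWithinAt (fun s => Real.exp (-s/l) * A s + Real.exp (s/l) * B s)
        ((Real.exp (-(0:ℝ)/l) * (-1/l)) * A 0 + Real.exp (-(0:ℝ)/l) * k₁ 0
          + ((Real.exp ((0:ℝ)/l) * (1/l)) * B 0 + Real.exp ((0:ℝ)/l) * (-(k₂ 0))))
        (Set.Ici 0) 0 :=
      (((hexpneg 0).hasDerivWithinAt.mul hA0).add ((hexppos 0).hasDerivWithinAt.mul hB0))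
    have hd0 : (Real.exp (-(0:ℝ)/l) * (-1/l)) * A 0 + Real.exp (-(0:ℝ)/l) * k₁ 0
          + ((Real.exp ((0:ℝ)/l) * (1/l)) * B 0 + Real.exp ((0:ℝ)/l) * (-(k₂ 0)))
        = ε 0 / l := by
      rw [hA00, hk12_0, hε0]
      simp
      ring
    rw [hd0] at hg0
    have hright : HasDerivWithinAt ε (ε 0 / l) (Set.Ici 0) 0 := by
      have h1 : HasDerivWithinAt (fun s => Real.exp (-s/l) * A s + Real.exp (s/l) * B s)
          (ε 0 / l) (Set.Icc 0 L) 0 := hg0.mono Set.Icc_subset_Ici_self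
      have h2 : HasDerivWithinAt ε (ε 0 / l) (Set.Icc 0 L) 0 :=
        h1.congr (fun x hx => hεg x hx) (hεg 0 ⟨le_refl 0, le_of_lt hL⟩)
      exact h2.mono_of_mem_nhdsWithin
        (Filter.mem_of_superset (inter_mem_nhdsWithin _ (Iio_mem_nhds hL))
          (fun x hx => ⟨hx.1, le_of_lt hx.2⟩))
    have hleft : HasDerivWithinAt ε (ε 0 / l) (Set.Iic 0) 0 := by
      have h1 : HasDerivAt (fun s => Real.exp (s/l) * B 0)
          ((Real.exp ((0:ℝ)/l) * (1/l)) * B 0) 0 := (hexppos 0).mul_const (B 0)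
      have h2 : (Real.exp ((0:ℝ)/l) * (1/l)) * B 0 = ε 0 / l := by
        rw [hε0]; simp; ring
      rw [h2] at h1
      exact (h1.hasDerivWithinAt).congr (fun x hx => hεleft x hx)
        (hεleft 0 (Set.mem_Iic.mpr le_rfl))
    have : HasDerivAt ε (ε 0 / l) 0 := by
      have := hleft.union hright
      rwa [Set.Iic_union_Ici, hasDerivWithinAt_univ] at this
    exact this.deriv
  · -- at L
    have hgL : HasDerivWithinAt (fun s => Real.exp (-s/l) * A s + Real.exp (s/l) * B s)
        ((Real.exp (-L/l) * (-1/l)) * A L + Real.exp (-L/l) * k₁ L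
          + ((Real.exp (L/l) * (1/l)) * B L + Real.exp (L/l) * (-(k₂ L))))
        (Set.Iic L) L :=
      (((hexpneg L).hasDerivWithinAt.mul hAL).add ((hexppos L).hasDerivWithinAt.mul hBL))
    have hdL : (Real.exp (-L/l) * (-1/l)) * A L + Real.exp (-L/l) * k₁ L
          + ((Real.exp (L/l) * (1/l)) * B L + Real.exp (L/l) * (-(k₂ L)))
        = -(ε L) / l := by
      rw [hBLL, hεL, hk1, hk2]
      simp only [mul_zero, zero_mul, add_zero]
      have e1 : Real.exp (-L/l) * Real.exp (L/l) = 1 := by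
        rw [← Real.exp_add, show -L/l + L/l = 0 by ring, Real.exp_zero]
      have e2 : Real.exp (L/l) * Real.exp (-L/l) = 1 := by
        rw [← Real.exp_add, show L/l + -L/l = 0 by ring, Real.exp_zero]
      field_simp
      nlinarith [e1, e2, Real.exp_pos (L/l), Real.exp_pos (-L/l)]
    rw [hdL] at hgL
    have hleft : HasDerivWithinAt ε (-(ε L) / l) (Set.Iic L) L := by
      have h1 : HasDerivWithinAt (fun s => Real.exp (-s/l) * A s + Real.exp (s/l) * B s)
          (-(ε L) / l) (Set.Icc 0 L) L := hgL.mono Set.Icc_subset_Iic_self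
      have h2 : HasDerivWithinAt ε (-(ε L) / l) (Set.Icc 0 L) L :=
        h1.congr (fun x hx => hεg x hx) (hεg L ⟨le_of_lt hL, le_refl L⟩)
      exact h2.mono_of_mem_nhdsWithin
        (Filter.mem_of_superset (inter_mem_nhdsWithin _ (Ioi_mem_nhds hL))
          (fun x hx => ⟨le_of_lt hx.2, hx.1⟩))
    have hright : HasDerivWithinAt ε (-(ε L) / l) (Set.Ici L) L := by
      have h1 : HasDerivAt (fun s => Real.exp (-s/l) * A L)
          ((Real.exp (-L/l) * (-1/l)) * A L) L := (hexpneg L).mul_const (A L)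
      have h2 : (Real.exp (-L/l) * (-1/l)) * A L = -(ε L) / l := by
        rw [hεL]; ring
      rw [h2] at h1
      exact (h1.hasDerivWithinAt).congr (fun x hx => hεright x hx)
        (hεright L (Set.mem_Ici.mpr le_rfl))
    have : HasDerivAt ε (-(ε L) / l) L := by
      have := hleft.union hright
      rwa [Set.Iic_union_Ici, hasDerivWithinAt_univ] at this
    exact this.deriv
end

section
/- Let f : [0,L] → ℝ be continuous and l > 0. Then there exists a unique twice continuously differentiable function ε on [0,L] satisfying ε − l² ε'' = f on [0,L] together with the boundary conditions ε'(0) = ε(0)/l and ε'(L) = −ε(L)/l, namely ε(s) = ∫₀ᴸ (1/(2l)) exp(−|s−ξ|/l) f(ξ) dξ. -/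
/-!
Splitting the kernel integral at `ξ = s` writes the candidate solution as
`G s = (e^{-s/l} A s + e^{s/l} B s) / (2l)` with `A s = ∫₀ˢ e^{ξ/l} f` and `B s = ∫ₛᴸ e^{-ξ/l} f`.
Differentiating `A` and `B` by the fundamental theorem of calculus shows that `G` solves the
problem. For uniqueness, the difference `u` of two solutions satisfies `u = l² u''` with the
homogeneous Robin conditions, and integrating `(u u')' = u'² + u² / l²` gives
`∫₀ᴸ (u'² + u² / l²) = -(u(L)² + u(0)²) / l ≤ 0`, which forces `u = 0`.
-/

open MeasureTheory intervalIntegral Set Real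

noncomputable section

def IsRobinSolution (L l : ℝ) (f ε : ℝ → ℝ) : Prop :=
  ContDiffOn ℝ 2 ε (Icc 0 L) ∧
    (∀ s ∈ Icc (0:ℝ) L, ε s - l ^ 2 * derivWithin (derivWithin ε (Icc 0 L)) (Icc 0 L) s = f s) ∧
    derivWithin ε (Icc 0 L) 0 = ε 0 / l ∧
    derivWithin ε (Icc 0 L) L = -(ε L) / l

def leftMoment (l : ℝ) (f : ℝ → ℝ) (s : ℝ) : ℝ :=
  ∫ ξ in (0:ℝ)..s, exp (ξ / l) * f ξ

def rightMoment (L l : ℝ) (f : ℝ → ℝ) (s : ℝ) : ℝ :=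
  ∫ ξ in s..L, exp (-ξ / l) * f ξ

def greenSolution (L l : ℝ) (f : ℝ → ℝ) (s : ℝ) : ℝ :=
  (exp (-s / l) * leftMoment l f s + exp (s / l) * rightMoment L l f s) / (2 * l)

def greenSolutionDeriv (L l : ℝ) (f : ℝ → ℝ) (s : ℝ) : ℝ :=
  (exp (s / l) * rightMoment L l f s - exp (-s / l) * leftMoment l f s) / (2 * l ^ 2)

end

theorem hasDerivWithinAt_integral_Icc_right {a b s : ℝ} {g : ℝ → ℝ}
    (hg : ContinuousOn g (Icc a b)) (hs : s ∈ Icc a b) :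
    HasDerivWithinAt (fun t => ∫ x in a..t, g x) (g s) (Icc a b) s := by
  have : Fact (s ∈ Icc a b) := ⟨hs⟩
  refine integral_hasDerivWithinAt_right ?_
    ⟨Icc a b, self_mem_nhdsWithin, hg.aestronglyMeasurable measurableSet_Icc⟩ (hg s hs)
  exact (hg.mono (uIcc_of_le hs.1 ▸ Icc_subset_Icc_right hs.2)).intervalIntegrable

theorem hasDerivWithinAt_integral_Icc_left {a b s : ℝ} {g : ℝ → ℝ}
    (hg : ContinuousOn g (Icc a b)) (hs : s ∈ Icc a b) :
    HasDerivWithinAt (fun t => ∫ x in t..b, g x) (-g s) (Icc a b) s := by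
  have : Fact (s ∈ Icc a b) := ⟨hs⟩
  refine integral_hasDerivWithinAt_left ?_
    ⟨Icc a b, self_mem_nhdsWithin, hg.aestronglyMeasurable measurableSet_Icc⟩ (hg s hs)
  exact (hg.mono (uIcc_of_le hs.2 ▸ Icc_subset_Icc_left hs.1)).intervalIntegrable

theorem contDiffOn_two_of_hasDerivWithinAt {𝕜 F : Type*} [NontriviallyNormedField 𝕜]
    [NormedAddCommGroup F] [NormedSpace 𝕜 F] {S : Set 𝕜} (hS : UniqueDiffOn 𝕜 S)
    {u u' u'' : 𝕜 → F} (hu : ∀ x ∈ S, HasDerivWithinAt u (u' x) S x)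
    (hu' : ∀ x ∈ S, HasDerivWithinAt u' (u'' x) S x) (hu'' : ContinuousOn u'' S) :
    ContDiffOn 𝕜 2 u S := by
  have hC1 : ContDiffOn 𝕜 1 u' S :=
    (contDiffOn_one_iff_derivWithin hS).2 ⟨fun x hx => (hu' x hx).differentiableWithinAt,
      hu''.congr fun x hx => (hu' x hx).derivWithin (hS x hx)⟩
  exact (contDiffOn_succ_iff_derivWithin (n := 1) hS).2
    ⟨fun x hx => (hu x hx).differentiableWithinAt, by simp,
      hC1.congr fun x hx => (hu x hx).derivWithin (hS x hx)⟩

theorem eqOn_zero_of_robin_homogeneous {a b l : ℝ} (hab : a < b) (hl : 0 < l) {u u' : ℝ → ℝ}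
    (hu : ∀ x ∈ Icc a b, HasDerivWithinAt u (u' x) (Icc a b) x)
    (hu' : ∀ x ∈ Icc a b, HasDerivWithinAt u' (u x / l ^ 2) (Icc a b) x)
    (ha : u' a = u a / l) (hb : u' b = -u b / l) : EqOn u 0 (Icc a b) := by
  have hcu : ContinuousOn u (Icc a b) := fun x hx => (hu x hx).continuousWithinAt
  have hcu' : ContinuousOn u' (Icc a b) := fun x hx => (hu' x hx).continuousWithinAt
  have henergy : ContinuousOn (fun x => u' x ^ 2 + u x ^ 2 / l ^ 2) (Icc a b) := by
    fun_prop
  have hint : ∫ x in a..b, (u' x ^ 2 + u x ^ 2 / l ^ 2) = -(u b ^ 2 + u a ^ 2) / l := by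
    rw [integral_eq_sub_of_hasDerivAt_of_le hab.le (hcu.mul hcu') (fun x hx => ?_)
      (henergy.intervalIntegrable_of_Icc hab.le)]
    · simp only [Pi.mul_apply, ha, hb]
      field_simp
      ring
    · have hx' := Icc_mem_nhds hx.1 hx.2
      exact (((hu x (Ioo_subset_Icc_self hx)).hasDerivAt hx').mul
        ((hu' x (Ioo_subset_Icc_self hx)).hasDerivAt hx')).congr_deriv (by ring)
  intro c hc
  by_contra hne
  have hpos : 0 < ∫ x in a..b, (u' x ^ 2 + u x ^ 2 / l ^ 2) :=
    integral_pos hab henergy (fun x _ => by positivity)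
      ⟨c, hc, by have : u c ≠ 0 := hne; positivity⟩
  have hnonpos : -(u b ^ 2 + u a ^ 2) / l ≤ 0 :=
    div_nonpos_of_nonpos_of_nonneg (by nlinarith [sq_nonneg (u a), sq_nonneg (u b)]) hl.le
  linarith

theorem hasDerivAt_exp_div (l s : ℝ) : HasDerivAt (fun x => exp (x / l)) (exp (s / l) / l) s := by
  simpa [div_eq_mul_inv] using ((hasDerivAt_id s).div_const l).exp

theorem hasDerivAt_exp_neg_div (l s : ℝ) :
    HasDerivAt (fun x => exp (-x / l)) (-exp (-s / l) / l) s := by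
  simpa [div_eq_mul_inv] using ((hasDerivAt_id s).neg.div_const l).exp

section GreenSolution

variable {L l : ℝ} {f : ℝ → ℝ}

theorem hasDerivWithinAt_leftMoment (hf : ContinuousOn f (Icc 0 L)) {s : ℝ}
    (hs : s ∈ Icc 0 L) :
    HasDerivWithinAt (leftMoment l f) (exp (s / l) * f s) (Icc 0 L) s :=
  hasDerivWithinAt_integral_Icc_right (by fun_prop) hs

theorem hasDerivWithinAt_rightMoment (hf : ContinuousOn f (Icc 0 L)) {s : ℝ}
    (hs : s ∈ Icc 0 L) :
    HasDerivWithinAt (rightMoment L l f) (-(exp (-s / l) * f s)) (Icc 0 L) s :=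
  hasDerivWithinAt_integral_Icc_left (by fun_prop) hs

theorem hasDerivWithinAt_greenSolution (hl : l ≠ 0) (hf : ContinuousOn f (Icc 0 L)) {s : ℝ}
    (hs : s ∈ Icc 0 L) :
    HasDerivWithinAt (greenSolution L l f) (greenSolutionDeriv L l f s) (Icc 0 L) s := by
  refine ((((hasDerivAt_exp_neg_div l s).hasDerivWithinAt.mul
    (hasDerivWithinAt_leftMoment hf hs)).add
    ((hasDerivAt_exp_div l s).hasDerivWithinAt.mul
    (hasDerivWithinAt_rightMoment hf hs))).div_const (2 * l)).congr_deriv ?_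
  rw [greenSolutionDeriv]
  field_simp
  ring

theorem hasDerivWithinAt_greenSolutionDeriv (hl : l ≠ 0) (hf : ContinuousOn f (Icc 0 L))
    {s : ℝ} (hs : s ∈ Icc 0 L) :
    HasDerivWithinAt (greenSolutionDeriv L l f) ((greenSolution L l f s - f s) / l ^ 2)
      (Icc 0 L) s := by
  refine ((((hasDerivAt_exp_div l s).hasDerivWithinAt.mul
    (hasDerivWithinAt_rightMoment hf hs)).sub
    ((hasDerivAt_exp_neg_div l s).hasDerivWithinAt.mul
    (hasDerivWithinAt_leftMoment hf hs))).div_const (2 * l ^ 2)).congr_deriv ?_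
  rw [greenSolution, neg_div, exp_neg]
  field_simp
  ring

theorem greenSolutionDeriv_zero (hl : l ≠ 0) :
    greenSolutionDeriv L l f 0 = greenSolution L l f 0 / l := by
  simp only [greenSolutionDeriv, greenSolution, leftMoment, integral_same]
  field_simp
  ring

theorem greenSolutionDeriv_right_end (hl : l ≠ 0) :
    greenSolutionDeriv L l f L = -greenSolution L l f L / l := by
  simp only [greenSolutionDeriv, greenSolution, rightMoment, integral_same]
  field_simp
  ring

theorem integral_kernel_eq_greenSolution (hf : ContinuousOn f (Icc 0 L)) {s : ℝ}
    (hs : s ∈ Icc 0 L) :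
    ∫ ξ in (0:ℝ)..L, 1 / (2 * l) * exp (-|s - ξ| / l) * f ξ = greenSolution L l f s := by
  have hk : ContinuousOn (fun ξ => 1 / (2 * l) * exp (-|s - ξ| / l) * f ξ) (Icc 0 L) := by
    fun_prop
  have hleft : ∫ ξ in (0:ℝ)..s, 1 / (2 * l) * exp (-|s - ξ| / l) * f ξ
      = exp (-s / l) * leftMoment l f s / (2 * l) := by
    rw [leftMoment, mul_div_right_comm, ← intervalIntegral.integral_const_mul]
    refine integral_congr fun ξ hξ => ?_
    rw [uIcc_of_le hs.1] at hξ
    rw [abs_of_nonneg (sub_nonneg.2 hξ.2), show -(s - ξ) / l = -s / l + ξ / l by ring, exp_add]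
    ring
  have hright : ∫ ξ in s..L, 1 / (2 * l) * exp (-|s - ξ| / l) * f ξ
      = exp (s / l) * rightMoment L l f s / (2 * l) := by
    rw [rightMoment, mul_div_right_comm, ← intervalIntegral.integral_const_mul]
    refine integral_congr fun ξ hξ => ?_
    rw [uIcc_of_le hs.2] at hξ
    rw [abs_of_nonpos (sub_nonpos.2 hξ.1), show -(-(s - ξ)) / l = s / l + -ξ / l by ring,
      exp_add]
    ring
  rw [← integral_add_adjacent_intervals
    (hk.mono (uIcc_of_le hs.1 ▸ Icc_subset_Icc_right hs.2)).intervalIntegrable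
    (hk.mono (uIcc_of_le hs.2 ▸ Icc_subset_Icc_left hs.1)).intervalIntegrable,
    hleft, hright, greenSolution, add_div]

theorem isRobinSolution_of_eqOn_greenSolution (hL : 0 < L) (hl : l ≠ 0)
    (hf : ContinuousOn f (Icc 0 L)) {ε : ℝ → ℝ} (hε : EqOn ε (greenSolution L l f) (Icc 0 L)) :
    IsRobinSolution L l f ε := by
  have hU := uniqueDiffOn_Icc hL
  have hd1 : ∀ s ∈ Icc 0 L, HasDerivWithinAt ε (greenSolutionDeriv L l f s) (Icc 0 L) s :=
    fun s hs => (hasDerivWithinAt_greenSolution hl hf hs).congr_of_mem hε hs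
  have hderiv : EqOn (derivWithin ε (Icc 0 L)) (greenSolutionDeriv L l f) (Icc 0 L) :=
    fun s hs => (hd1 s hs).derivWithin (hU s hs)
  have hG : ContinuousOn (greenSolution L l f) (Icc 0 L) :=
    fun s hs => (hasDerivWithinAt_greenSolution hl hf hs).continuousWithinAt
  have h0 : (0:ℝ) ∈ Icc 0 L := left_mem_Icc.2 hL.le
  have hL' : L ∈ Icc 0 L := right_mem_Icc.2 hL.le
  refine ⟨contDiffOn_two_of_hasDerivWithinAt hU hd1
    (fun s hs => hasDerivWithinAt_greenSolutionDeriv hl hf hs)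
    ((hG.sub hf).div_const _), fun s hs => ?_, ?_, ?_⟩
  · rw [derivWithin_congr hderiv (hderiv hs),
      (hasDerivWithinAt_greenSolutionDeriv hl hf hs).derivWithin (hU s hs), hε hs]
    field_simp
    ring
  · rw [hderiv h0, hε h0, greenSolutionDeriv_zero hl]
  · rw [hderiv hL', hε hL', greenSolutionDeriv_right_end hl]

theorem eqOn_greenSolution_of_isRobinSolution (hL : 0 < L) (hl : 0 < l)
    (hf : ContinuousOn f (Icc 0 L)) {ε : ℝ → ℝ} (hε : IsRobinSolution L l f ε) :
    EqOn ε (greenSolution L l f) (Icc 0 L) := by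
  obtain ⟨hC2, hode, h0, hL'⟩ := hε
  have hU := uniqueDiffOn_Icc hL
  have hd1 : ∀ s ∈ Icc 0 L, HasDerivWithinAt ε (derivWithin ε (Icc 0 L) s) (Icc 0 L) s :=
    fun s hs => (hC2.differentiableOn (by norm_num) s hs).hasDerivWithinAt
  have hd2 : ∀ s ∈ Icc 0 L, HasDerivWithinAt (derivWithin ε (Icc 0 L))
      ((ε s - f s) / l ^ 2) (Icc 0 L) s := by
    intro s hs
    refine ((hC2.derivWithin hU (m := 1) (by norm_num)).differentiableOn (by norm_num)
      s hs).hasDerivWithinAt.congr_deriv ?_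
    rw [← hode s hs]
    field_simp
    ring
  intro s hs
  refine sub_eq_zero.1 (eqOn_zero_of_robin_homogeneous hL hl
    (u := ε - greenSolution L l f) (u' := derivWithin ε (Icc 0 L) - greenSolutionDeriv L l f)
    (fun x hx => (hd1 x hx).sub (hasDerivWithinAt_greenSolution hl.ne' hf hx))
    (fun x hx => ((hd2 x hx).sub (hasDerivWithinAt_greenSolutionDeriv hl.ne' hf hx)).congr_deriv
      (by simp only [Pi.sub_apply]; ring)) ?_ ?_ hs)
  · simp only [Pi.sub_apply, h0, greenSolutionDeriv_zero hl.ne']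
    ring
  · simp only [Pi.sub_apply, hL', greenSolutionDeriv_right_end hl.ne']
    ring

end GreenSolution

theorem exists_unique_solution (L l : ℝ) (hL : 0 < L) (hl : 0 < l)
    (f : ℝ → ℝ) (hf : ContinuousOn f (Set.Icc 0 L)) :
    (∀ ε : ℝ → ℝ,
      (∀ s : ℝ, ε s = ∫ ξ in (0:ℝ)..L, (1 / (2 * l)) * Real.exp (-|s - ξ| / l) * f ξ) →
      ContDiffOn ℝ 2 ε (Set.Icc 0 L) ∧
      (∀ s ∈ Set.Icc (0:ℝ) L,
        ε s - l ^ 2 * derivWithin (derivWithin ε (Set.Icc 0 L)) (Set.Icc 0 L) s = f s) ∧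
      derivWithin ε (Set.Icc 0 L) 0 = ε 0 / l ∧
      derivWithin ε (Set.Icc 0 L) L = -(ε L) / l) ∧
    (∀ ε : ℝ → ℝ,
      ContDiffOn ℝ 2 ε (Set.Icc 0 L) →
      (∀ s ∈ Set.Icc (0:ℝ) L,
        ε s - l ^ 2 * derivWithin (derivWithin ε (Set.Icc 0 L)) (Set.Icc 0 L) s = f s) →
      derivWithin ε (Set.Icc 0 L) 0 = ε 0 / l →
      derivWithin ε (Set.Icc 0 L) L = -(ε L) / l →
      ∀ s ∈ Set.Icc (0:ℝ) L,
        ε s = ∫ ξ in (0:ℝ)..L, (1 / (2 * l)) * Real.exp (-|s - ξ| / l) * f ξ) := by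
  refine ⟨fun ε hε => ?_, fun ε hC2 hode h0 hL' s hs => ?_⟩
  · exact isRobinSolution_of_eqOn_greenSolution hL hl.ne' hf
      fun s hs => (hε s).trans (integral_kernel_eq_greenSolution hf hs)
  · rw [integral_kernel_eq_greenSolution hf hs]
    exact eqOn_greenSolution_of_isRobinSolution hL hl hf ⟨hC2, hode, h0, hL'⟩ hs
end
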